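/- Let d be a positive integer, p an odd prime with p ∤ d, and n ∈ {1, 2, 3}. Then N(d·p^{2n}) ≤ 5103 · N(d), where for a positive integer m, N(m) := 3·4^{Ω(m)}/16 + 2·3^{Ω(m)}/32 + 2^{Ω(m)}/72 + 3·2^{Ω(m)}/96 + 53/5760 + Σ_{x | m} (2·3^{Ω(x)}/8 + 2^{Ω(x)}/16 + 1/24) + Σ_{x | m} (1/4)·(2·2^{Ω(x)}/4 + 5/24)·(2·2^{Ω(m/x)}/4 + 5/24). -/

import Mathlib

open Real Finset

/-- The extended bound `Nref(m)` for the reflective part of the mass of a (not necessarily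
strongly square free) quaternary lattice of determinant `m` (section 4.2); `Ω` is realised
by `Nat.primeFactorsList.length`. -/
noncomputable def NrefExt (m : ℕ) : ℝ :=
  3 * (4 : ℝ) ^ m.primeFactorsList.length / 16 +
    2 * (3 : ℝ) ^ m.primeFactorsList.length / 32 +
    (2 : ℝ) ^ m.primeFactorsList.length / 72 +
    3 * (2 : ℝ) ^ m.primeFactorsList.length / 96 + 53 / 5760 +
    (∑ x ∈ m.divisors,
      (2 * (3 : ℝ) ^ x.primeFactorsList.length / 8 +
        (2 : ℝ) ^ x.primeFactorsList.length / 16 + 1 / 24)) +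
    ∑ x ∈ m.divisors,
      (1 / 4) * (2 * (2 : ℝ) ^ x.primeFactorsList.length / 4 + 5 / 24) *
        (2 * (2 : ℝ) ^ (m / x).primeFactorsList.length / 4 + 5 / 24)

/-!
A divisor of `d * p ^ N` with `p ∤ d` is uniquely `y * p ^ j` with `y ∣ d` and `j ≤ N`, its
complementary divisor is `(d / y) * p ^ (N - j)`, and `Ω` grows by `j` resp. `N - j`. Every part
of `NrefExt` is a combination of `4 ^ Ω`, `3 ^ Ω`, `2 ^ Ω` and constants with nonnegative
coefficients, so shifting `Ω` by at most `N` multiplies the leading part by at most `4 ^ N`, each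
term of the first divisor sum by at most `3 ^ N` and each term of the second by `2 ^ N`, while
every divisor of `d` is hit `N + 1` times. For `N = 2n ≤ 6` the worst factor is
`7 * 3 ^ 6 = 5103`.
-/

open scoped ArithmeticFunction.Omega
open ArithmeticFunction

theorem sum_divisors_mul_of_coprime {M : Type*} [AddCommMonoid M] {m n : ℕ} (hmn : m.Coprime n)
    (f : ℕ → M) :
    ∑ x ∈ (m * n).divisors, f x = ∑ a ∈ m.divisors, ∑ b ∈ n.divisors, f (a * b) := by
  rw [Nat.divisors_mul, Finset.mul_def, sum_image fun a ha b hb => hmn.mul_injOn_divisors ha hb,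
    sum_product]

theorem sum_divisors_mul_prime_pow {M : Type*} [AddCommMonoid M] {d p : ℕ} (hp : p.Prime)
    (hpd : ¬ p ∣ d) (N : ℕ) (F : ℕ → ℕ → M) :
    ∑ x ∈ (d * p ^ N).divisors, F (Ω x) (Ω (d * p ^ N / x)) =
      ∑ y ∈ d.divisors, ∑ j ∈ range (N + 1), F (Ω y + j) (Ω (d / y) + (N - j)) := by
  have hcop : d.Coprime (p ^ N) := ((hp.coprime_iff_not_dvd.mpr hpd).symm).pow_right N
  rw [sum_divisors_mul_of_coprime hcop]
  refine sum_congr rfl fun y hy => ?_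
  rw [Nat.sum_divisors_prime_pow hp]
  refine sum_congr rfl fun j hj => ?_
  obtain ⟨hyd, hd⟩ := Nat.mem_divisors.mp hy
  have hjN : j ≤ N := Nat.lt_succ_iff.mp (mem_range.mp hj)
  have hy0 : y ≠ 0 := ne_zero_of_dvd_ne_zero hd hyd
  have hdy0 : d / y ≠ 0 := (Nat.div_ne_zero_iff_of_dvd hyd).mpr ⟨hd, hy0⟩
  have hpow0 : ∀ i, p ^ i ≠ 0 := fun i => pow_ne_zero i hp.ne_zero
  rw [← Nat.div_mul_div_comm hyd (pow_dvd_pow p hjN), Nat.pow_div hjN hp.pos,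
    cardFactors_mul hy0 (hpow0 _), cardFactors_mul hdy0 (hpow0 _),
    cardFactors_apply_prime_pow hp, cardFactors_apply_prime_pow hp]

theorem sum_divisors_mul_prime_pow_le {d p N : ℕ} (hp : p.Prime) (hpd : ¬ p ∣ d)
    {F : ℕ → ℕ → ℝ} {c : ℝ}
    (hF : ∀ k l i j, i + j = N → F (k + i) (l + j) ≤ c * F k l) :
    ∑ x ∈ (d * p ^ N).divisors, F (Ω x) (Ω (d * p ^ N / x)) ≤
      (N + 1) * c * ∑ y ∈ d.divisors, F (Ω y) (Ω (d / y)) := by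
  rw [sum_divisors_mul_prime_pow hp hpd, mul_sum]
  refine sum_le_sum fun y _ => ?_
  calc _ ≤ ∑ _j ∈ range (N + 1), c * F (Ω y) (Ω (d / y)) :=
        sum_le_sum fun j hj => hF _ _ _ _ (by rw [mem_range] at hj; omega)
    _ = _ := by rw [sum_const, card_range, nsmul_eq_mul]; push_cast; ring

noncomputable def nrefHead (k : ℕ) : ℝ :=
  3 * 4 ^ k / 16 + 2 * 3 ^ k / 32 + 2 ^ k / 72 + 3 * 2 ^ k / 96 + 53 / 5760

noncomputable def nrefDivisorTerm (k : ℕ) : ℝ := 2 * 3 ^ k / 8 + 2 ^ k / 16 + 1 / 24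

noncomputable def nrefPairTerm (k l : ℕ) : ℝ :=
  1 / 4 * (2 * 2 ^ k / 4 + 5 / 24) * (2 * 2 ^ l / 4 + 5 / 24)

theorem nrefExt_eq (m : ℕ) :
    NrefExt m = nrefHead (Ω m) + ∑ x ∈ m.divisors, nrefDivisorTerm (Ω x) +
      ∑ x ∈ m.divisors, nrefPairTerm (Ω x) (Ω (m / x)) := by
  simp only [NrefExt, nrefHead, nrefDivisorTerm, nrefPairTerm, cardFactors_apply]

theorem nrefHead_nonneg (k : ℕ) : 0 ≤ nrefHead k := by unfold nrefHead; positivity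

theorem nrefDivisorTerm_nonneg (k : ℕ) : 0 ≤ nrefDivisorTerm k := by
  unfold nrefDivisorTerm; positivity

theorem nrefPairTerm_nonneg (k l : ℕ) : 0 ≤ nrefPairTerm k l := by
  unfold nrefPairTerm; positivity

theorem nrefHead_add_le (k j : ℕ) : nrefHead (k + j) ≤ 4 ^ j * nrefHead k := by
  have h3 : (3 : ℝ) ^ j ≤ 4 ^ j := pow_le_pow_left₀ (by norm_num) (by norm_num) j
  have h2 : (2 : ℝ) ^ j ≤ 4 ^ j := pow_le_pow_left₀ (by norm_num) (by norm_num) j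
  have h1 : (1 : ℝ) ≤ 4 ^ j := one_le_pow₀ (by norm_num)
  unfold nrefHead
  rw [pow_add, pow_add, pow_add]
  nlinarith [mul_le_mul_of_nonneg_left h3 (pow_nonneg zero_le_three k),
    mul_le_mul_of_nonneg_left h2 (pow_nonneg zero_le_two k)]

theorem nrefDivisorTerm_add_le (k j : ℕ) :
    nrefDivisorTerm (k + j) ≤ 3 ^ j * nrefDivisorTerm k := by
  have h2 : (2 : ℝ) ^ j ≤ 3 ^ j := pow_le_pow_left₀ (by norm_num) (by norm_num) j
  have h1 : (1 : ℝ) ≤ 3 ^ j := one_le_pow₀ (by norm_num)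
  unfold nrefDivisorTerm
  rw [pow_add, pow_add]
  nlinarith [mul_le_mul_of_nonneg_left h2 (pow_nonneg zero_le_two k)]

theorem nrefPairTerm_add_le (k l i j : ℕ) :
    nrefPairTerm (k + i) (l + j) ≤ 2 ^ (i + j) * nrefPairTerm k l := by
  have hfactor : ∀ k i : ℕ,
      2 * (2 : ℝ) ^ (k + i) / 4 + 5 / 24 ≤ 2 ^ i * (2 * 2 ^ k / 4 + 5 / 24) := by
    intro k i
    have : (1 : ℝ) ≤ 2 ^ i := one_le_pow₀ (by norm_num)
    rw [pow_add]
    nlinarith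
  unfold nrefPairTerm
  calc _ ≤ (1 : ℝ) / 4 * (2 ^ i * (2 * 2 ^ k / 4 + 5 / 24)) *
        (2 ^ j * (2 * 2 ^ l / 4 + 5 / 24)) := by gcongr <;> exact hfactor _ _
    _ = _ := by ring

theorem nref_ext_watson_bound_general (d : ℕ) (p : ℕ) (hp : p.Prime)
    (hpd : ¬ p ∣ d) (n : ℕ) (hn : n = 1 ∨ n = 2 ∨ n = 3) :
    NrefExt (d * p ^ (2 * n)) ≤ 5103 * NrefExt d := by
  obtain ⟨h4, h3, h2⟩ : (4 : ℝ) ^ (2 * n) ≤ 5103 ∧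
      ((2 * n : ℕ) + 1 : ℝ) * 3 ^ (2 * n) ≤ 5103 ∧
      ((2 * n : ℕ) + 1 : ℝ) * 2 ^ (2 * n) ≤ 5103 := by
    rcases hn with rfl | rfl | rfl <;> norm_num
  have hd : d ≠ 0 := by rintro rfl; exact hpd (dvd_zero p)
  have hΩ : Ω (d * p ^ (2 * n)) = Ω d + 2 * n := by
    rw [cardFactors_mul hd (pow_ne_zero _ hp.ne_zero), cardFactors_apply_prime_pow hp]
  have hhead := nrefHead_add_le (Ω d) (2 * n)
  have hdiv := sum_divisors_mul_prime_pow_le hp hpd (N := 2 * n)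
    (F := fun k _ => nrefDivisorTerm k) (c := 3 ^ (2 * n)) fun k _ i j hij =>
      (nrefDivisorTerm_add_le k i).trans <| mul_le_mul_of_nonneg_right
        (pow_le_pow_right₀ (by norm_num) (by omega)) (nrefDivisorTerm_nonneg k)
  have hpair := sum_divisors_mul_prime_pow_le hp hpd (N := 2 * n) (F := nrefPairTerm)
    (c := 2 ^ (2 * n)) fun k l i j hij => hij ▸ nrefPairTerm_add_le k l i j
  have hhead0 := nrefHead_nonneg (Ω d)
  have hdiv0 := sum_nonneg fun y (_ : y ∈ d.divisors) => nrefDivisorTerm_nonneg (Ω y)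
  have hpair0 := sum_nonneg fun y (_ : y ∈ d.divisors) => nrefPairTerm_nonneg (Ω y) (Ω (d / y))
  rw [nrefExt_eq, nrefExt_eq, hΩ]
  nlinarith

/-- The numerical content of Lemma 4.7(b): if `p` is an odd prime not dividing `d` and
`n ∈ {1, 2, 3}`, then `Nref(d·p^{2n}) ≤ 5103 · Nref(d)`. -/
theorem nref_ext_watson_bound (d : ℕ) (hd : 0 < d) (p : ℕ) (hp : p.Prime) (hp2 : p ≠ 2)
    (hpd : ¬ p ∣ d) (n : ℕ) (hn : n = 1 ∨ n = 2 ∨ n = 3) :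
    NrefExt (d * p ^ (2 * n)) ≤ 5103 * NrefExt d :=
  nref_ext_watson_bound_general d p hp hpd n hn
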